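/- Let S₁ ⊆ S₂ be multiplicatively closed subsets of h(R) such that for every s ∈ S₂ there exists r ∈ S₂ with sr ∈ S₁, and let P be a graded submodule of M with (P :_R M) ∩ S₂ = ∅. If P is a graded classical S₂-primary submodule of M, then P is a graded classical S₁-primary submodule of M. -/

import Mathlib

variable {G : Type*} [AddCommGroup G] [DecidableEq G]
variable {R : Type*} [CommRing R] (𝒜 : G → AddSubmonoid R) [GradedRing 𝒜]
variable {M : Type*} [AddCommGroup M] [Module R M]
variable (ℳ : G → AddSubmonoid M) [SetLike.GradedSMul 𝒜 ℳ] [DirectSum.Decomposition ℳ]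

/-- `P` is a graded submodule of the graded module `M`. -/
def IsGradedSubmodule (P : Submodule R M) : Prop :=
  ∀ m ∈ P, ∀ g : G, (DirectSum.decompose ℳ m g : M) ∈ P

/-- `P` is a graded classical primary submodule of `M`. -/
def IsGrClPrimary (P : Submodule R M) : Prop :=
  IsGradedSubmodule ℳ P ∧ P ≠ ⊤ ∧
    ∀ x y : R, ∀ m : M, SetLike.IsHomogeneousElem 𝒜 x → SetLike.IsHomogeneousElem 𝒜 y →
      SetLike.IsHomogeneousElem ℳ m → (x * y) • m ∈ P →
        x • m ∈ P ∨ ∃ n : ℕ, 0 < n ∧ y ^ n • m ∈ P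

/-- `P` is a graded classical `S`-primary submodule of `M`;
this includes the requirement `(P :_R M) ∩ S = ∅`. -/
def IsGrClSPrimary (S : Submonoid R) (P : Submodule R M) : Prop :=
  IsGradedSubmodule ℳ P ∧ Disjoint ((P.colon ⊤ : Ideal R) : Set R) (S : Set R) ∧
    ∃ s ∈ S, ∀ x y : R, ∀ m : M, SetLike.IsHomogeneousElem 𝒜 x → SetLike.IsHomogeneousElem 𝒜 y →
      SetLike.IsHomogeneousElem ℳ m → (x * y) • m ∈ P →
        (s * x) • m ∈ P ∨ ∃ n : ℕ, 0 < n ∧ (s * y ^ n) • m ∈ P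

theorem Submodule.mul_right_mul_smul_mem (P : Submodule R M) {s a : R} {m : M} (r : R)
    (h : (s * a) • m ∈ P) : (s * r * a) • m ∈ P := by
  rw [mul_right_comm, mul_comm, mul_smul]
  exact P.smul_mem r h

theorem isGrClSPrimary_of_sat (S₁ S₂ : Submonoid R) (h12 : S₁ ≤ S₂)
    (hsat : ∀ s ∈ S₂, ∃ r ∈ S₂, s * r ∈ S₁)
    (P : Submodule R M)
    (hP : IsGrClSPrimary 𝒜 ℳ S₂ P) : IsGrClSPrimary 𝒜 ℳ S₁ P := by
  obtain ⟨hgr, hdisj, s, hs, hprimary⟩ := hP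
  obtain ⟨r, -, hsr⟩ := hsat s hs
  refine ⟨hgr, hdisj.mono_right (by exact_mod_cast h12), s * r, hsr, ?_⟩
  intro x y m hx hy hm hxy
  refine (hprimary x y m hx hy hm hxy).imp (P.mul_right_mul_smul_mem r) ?_
  rintro ⟨n, hn, hyn⟩
  exact ⟨n, hn, P.mul_right_mul_smul_mem r hyn⟩
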